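/- Let f_i : ℝⁿ → ℝ, i = 1, …, m, be quasi-convex, upper semicontinuous, and 0-lower semicontinuous functions, each satisfying property (sHöl) on S^{f_i}_{≤,0} with order δ_i > 0 and modulus L_i > 0, and suppose ⋂_{i=1}^m S^{f_i}_{<,0} ≠ ∅. For each i let c_i : ℝⁿ → ℝⁿ be a selection with c_i(x) ∈ ∂*f_i(x) \ {0} whenever f_i(x) > 0, and let P_{f_i} be the associated star subgradient projections. Then for any starting point x₁ ∈ ℝⁿ, the sequence generated by the cyclic star subgradient projection method, x_{k+1} := P_{f_m}(P_{f_{m−1}}(⋯ P_{f_2}(P_{f_1}(x_k)) ⋯)), converges to a point x* ∈ ⋂_{i=1}^m S^{f_i}_{≤,0}, i.e., to a solution of the quasi-convex feasibility problem. -/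

import Mathlib

/-- The star subdifferential of `f` at `x`. -/
def starSubdiff {n : ℕ} (f : EuclideanSpace ℝ (Fin n) → ℝ) (x : EuclideanSpace ℝ (Fin n)) :
    Set (EuclideanSpace ℝ (Fin n)) :=
  {g | ∀ y : EuclideanSpace ℝ (Fin n), f y < f x → (inner ℝ g (y - x) : ℝ) ≤ 0}

/-- The star subgradient projection relative to `f`, with modulus `L`, order `δ` and
star subgradient selection `c`. -/
noncomputable def starProj {n : ℕ} (f : EuclideanSpace ℝ (Fin n) → ℝ) (L δ : ℝ)
    (c : EuclideanSpace ℝ (Fin n) → EuclideanSpace ℝ (Fin n)) (x : EuclideanSpace ℝ (Fin n)) :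
    EuclideanSpace ℝ (Fin n) :=
  if 0 < f x then x - ((max (f x) 0 / L) ^ (1 / δ)) • (‖c x‖⁻¹ • c x) else x

/-- The composition `T_m ∘ T_{m-1} ∘ ⋯ ∘ T_1` of a finite family of operators
(`T 0` is applied first, `T (m-1)` last). -/
def compFamily {n m : ℕ}
    (T : Fin m → (EuclideanSpace ℝ (Fin n) → EuclideanSpace ℝ (Fin n))) :
    EuclideanSpace ℝ (Fin n) → EuclideanSpace ℝ (Fin n) :=
  fun x => (List.ofFn T).foldl (fun y g => g y) x

/-!
Let `z` be a Slater point and `B(z, ρ)` a closed ball on which every `f i` is negative. For a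
star subgradient projection `P`, the point `z + (ρ + t) u` (with `t = ‖P a - a‖` and `u` the
normalized star subgradient) has a smaller value than `a` by property (sHöl), so
`⟪u, a - z⟫ ≥ ρ + t`; hence `‖P a - z‖² + 2ρ ‖P a - a‖ ≤ ‖a - z‖²`. This
inequality survives composition, so the step lengths of the cyclic method are summable, the
iterates converge to some `x*`, and so do the intermediate points of each sweep. Along these,
`f i ≤ L i ‖P_i a - a‖ ^ δ i → 0`, so `x*` lies in the closure of `{f i ≤ ε}` for every
`ε > 0`. Since `z` is interior to these convex sets, the open segment from `z` to `x*` lies in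
`{f i ≤ 0}`, which is closed and therefore contains `x*`.
-/

open Filter Topology Metric

def IsLinearlyFejer {X : Type*} [PseudoMetricSpace X] (ρ : ℝ) (z : X) (g : X → X) : Prop :=
  ∀ a, dist (g a) z ^ 2 + ρ * dist (g a) a ≤ dist a z ^ 2

namespace IsLinearlyFejer

variable {X : Type*} [PseudoMetricSpace X] {ρ : ℝ} {z : X} {g h : X → X}

theorem dist_sq_le (hρ : 0 ≤ ρ) (hg : IsLinearlyFejer ρ z g) (a : X) :
    dist (g a) z ^ 2 ≤ dist a z ^ 2 := by
  nlinarith [hg a, dist_nonneg (x := g a) (y := a)]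

theorem comp (hρ : 0 ≤ ρ) (hh : IsLinearlyFejer ρ z h) (hg : IsLinearlyFejer ρ z g) :
    IsLinearlyFejer ρ z (h ∘ g) := fun a => by
  have := mul_le_mul_of_nonneg_left (dist_triangle (h (g a)) (g a) a) hρ
  simp only [Function.comp_apply]
  linarith [hh (g a), hg a]

theorem foldl (hρ : 0 ≤ ρ) {l : List (X → X)} (hl : ∀ g ∈ l, IsLinearlyFejer ρ z g) :
    IsLinearlyFejer ρ z (fun a => l.foldl (fun y g => g y) a) := by
  induction l with
  | nil => intro a; simp
  | cons g l ih =>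
    simp only [List.mem_cons, forall_eq_or_imp] at hl
    exact (ih hl.2).comp hρ hl.1

theorem mul_dist_le_of_comp (hρ : 0 ≤ ρ) (hh : IsLinearlyFejer ρ z h)
    (hg : IsLinearlyFejer ρ z g) (a : X) :
    ρ * dist (g a) a ≤ dist a z ^ 2 - dist (h (g a)) z ^ 2 := by
  linarith [hg a, hh.dist_sq_le hρ (g a)]

theorem cauchySeq_of_iterate (hρ : 0 < ρ) (hg : IsLinearlyFejer ρ z g) {x : ℕ → X}
    (hx : ∀ k, x (k + 1) = g (x k)) : CauchySeq x := by
  have hstep : ∀ k, dist (x (k + 1)) (x k) ≤ (dist (x k) z ^ 2 - dist (x (k + 1)) z ^ 2) / ρ :=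
    fun k => by
      rw [le_div_iff₀ hρ, mul_comm, hx]
      linarith [hg (x k)]
  refine cauchySeq_of_summable_dist (summable_of_sum_range_le (c := dist (x 0) z ^ 2 / ρ)
    (fun _ => dist_nonneg) fun N => ?_)
  calc ∑ k ∈ Finset.range N, dist (x k) (x (k + 1))
      ≤ ∑ k ∈ Finset.range N, (dist (x k) z ^ 2 - dist (x (k + 1)) z ^ 2) / ρ :=
        Finset.sum_le_sum fun k _ => dist_comm (x k) _ ▸ hstep k
    _ = (dist (x 0) z ^ 2 - dist (x N) z ^ 2) / ρ := by
        rw [← Finset.sum_div, Finset.sum_range_sub' (fun k => dist (x k) z ^ 2)]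
    _ ≤ dist (x 0) z ^ 2 / ρ := by gcongr; nlinarith [sq_nonneg (dist (x N) z)]

theorem tendsto_of_iterate_comp (hρ : 0 < ρ) (hh : IsLinearlyFejer ρ z h)
    (hg : IsLinearlyFejer ρ z g) {x : ℕ → X} (hx : ∀ k, x (k + 1) = h (g (x k))) {xs : X}
    (hlim : Tendsto x atTop (𝓝 xs)) : Tendsto (fun k => g (x k)) atTop (𝓝 xs) := by
  have hdz : ∀ y : ℕ → X, Tendsto y atTop (𝓝 xs) →
      Tendsto (fun k => dist (y k) z ^ 2) atTop (𝓝 (dist xs z ^ 2)) :=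
    fun y hy => (hy.dist tendsto_const_nhds).pow 2
  have hgap : Tendsto (fun k => (dist (x k) z ^ 2 - dist (x (k + 1)) z ^ 2) / ρ + dist (x k) xs)
      atTop (𝓝 0) := by
    simpa using ((hdz x hlim).sub (hdz _ (hlim.comp (tendsto_add_atTop_nat 1)))).div_const ρ
      |>.add (tendsto_iff_dist_tendsto_zero.1 hlim)
  refine tendsto_iff_dist_tendsto_zero.2 (squeeze_zero (fun _ => dist_nonneg) (fun k => ?_) hgap)
  have hk : ρ * dist (g (x k)) (x k) ≤ dist (x k) z ^ 2 - dist (x (k + 1)) z ^ 2 := by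
    rw [hx]; exact hh.mul_dist_le_of_comp hρ.le hg (x k)
  calc dist (g (x k)) xs ≤ dist (g (x k)) (x k) + dist (x k) xs := dist_triangle _ _ _
    _ ≤ _ := by gcongr; rwa [le_div_iff₀ hρ, mul_comm]

end IsLinearlyFejer

theorem norm_sub_smul_sub_sq_add_le {F : Type*} [NormedAddCommGroup F] [InnerProductSpace ℝ F]
    {a z u : F} {t ρ : ℝ} (hu : ‖u‖ = 1) (ht : 0 ≤ t) (h : ρ + t ≤ inner ℝ u (a - z)) :
    ‖a - t • u - z‖ ^ 2 + 2 * ρ * t ≤ ‖a - z‖ ^ 2 := by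
  have hexp : ‖a - t • u - z‖ ^ 2 = ‖a - z‖ ^ 2 - 2 * t * inner ℝ u (a - z) + t ^ 2 := by
    rw [show a - t • u - z = (a - z) - t • u by abel, norm_sub_sq_real, real_inner_smul_right,
      norm_smul, hu, real_inner_comm, Real.norm_of_nonneg ht]
    ring
  nlinarith

theorem le_zero_of_tendsto_of_eventually_le {E : Type*} [NormedAddCommGroup E] [NormedSpace ℝ E]
    {f : E → ℝ} (hqc : ∀ lam : ℝ, Convex ℝ {y | f y ≤ lam}) (hopen : IsOpen {y | f y < 0})
    (hclosed : IsClosed {y | f y ≤ 0}) {z : E} (hz : f z < 0) {ι : Type*} {l : Filter ι}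
    [l.NeBot] {a : ι → E} {xs : E} (ha : Tendsto a l (𝓝 xs))
    (hfa : ∀ ε > 0, ∀ᶠ k in l, f (a k) ≤ ε) : f xs ≤ 0 := by
  have hseg : openSegment ℝ z xs ⊆ {y | f y ≤ 0} := fun p hp =>
    show f p ≤ 0 from le_of_forall_gt_imp_ge_of_dense fun ε hε => by
      have hz' : z ∈ interior {y | f y ≤ ε} :=
        interior_maximal (fun y (hy : f y < 0) => (hy.trans hε).le) hopen hz
      have hxs : xs ∈ closure {y | f y ≤ ε} := mem_closure_of_tendsto ha (hfa ε hε)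
      exact (interior_subset ((hqc ε).openSegment_interior_closure_subset_interior hz' hxs hp) :
        p ∈ {y | f y ≤ ε})
  exact closure_minimal hseg hclosed
    (segment_subset_closure_openSegment (right_mem_segment ℝ z xs))

theorem norm_inv_norm_smul_self {F : Type*} [NormedAddCommGroup F] [NormedSpace ℝ F] {v : F}
    (hv : v ≠ 0) : ‖‖v‖⁻¹ • v‖ = 1 := by
  simpa using norm_smul_inv_norm (𝕜 := ℝ) hv

section StarProj

variable {n : ℕ} {f : EuclideanSpace ℝ (Fin n) → ℝ} {L δ : ℝ}
  {c : EuclideanSpace ℝ (Fin n) → EuclideanSpace ℝ (Fin n)} {a : EuclideanSpace ℝ (Fin n)}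

theorem starProj_of_pos (hfa : 0 < f a) :
    starProj f L δ c a = a - (f a / L) ^ (1 / δ) • (‖c a‖⁻¹ • c a) := by
  rw [starProj, if_pos hfa, max_eq_left hfa.le]

theorem dist_starProj_of_pos (hL : 0 < L) (hfa : 0 < f a) (hca : c a ≠ 0) :
    dist (starProj f L δ c a) a = (f a / L) ^ (1 / δ) := by
  rw [starProj_of_pos hfa, dist_eq_norm, sub_sub_cancel_left, norm_neg, norm_smul,
    norm_inv_norm_smul_self hca, mul_one,
    Real.norm_of_nonneg (Real.rpow_nonneg (div_pos hfa hL).le _)]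

theorem mul_rpow_rpow_one_div (hδ : 0 < δ) (hL : 0 < L) (hfa : 0 ≤ f a) :
    L * ((f a / L) ^ (1 / δ)) ^ δ = f a := by
  rw [one_div, Real.rpow_inv_rpow (div_nonneg hfa hL.le) hδ.ne', mul_div_cancel₀ _ hL.ne']

theorem le_mul_dist_starProj_rpow (hδ : 0 < δ) (hL : 0 < L) (hc : ∀ x, 0 < f x → c x ≠ 0) :
    f a ≤ L * dist (starProj f L δ c a) a ^ δ := by
  by_cases hfa : 0 < f a
  · rw [dist_starProj_of_pos hL hfa (hc a hfa), mul_rpow_rpow_one_div hδ hL hfa.le]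
  · rw [starProj, if_neg hfa, dist_self, Real.zero_rpow hδ.ne', mul_zero]
    exact not_lt.1 hfa

theorem starProj_isLinearlyFejer (hδ : 0 < δ) (hL : 0 < L)
    (hc : ∀ x, 0 < f x → c x ∈ starSubdiff f x ∧ c x ≠ 0)
    (hhol : ∀ q x' : EuclideanSpace ℝ (Fin n), f q ≤ 0 → |f x' - f q| ≤ L * ‖x' - q‖ ^ δ)
    {z : EuclideanSpace ℝ (Fin n)} {ρ : ℝ} (hρ : 0 ≤ ρ) (hball : closedBall z ρ ⊆ {v | f v < 0}) :
    IsLinearlyFejer (2 * ρ) z (starProj f L δ c) := by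
  intro a
  by_cases hfa : 0 < f a
  swap
  · simp [starProj, hfa]
  obtain ⟨hstar, hca⟩ := hc a hfa
  set u := ‖c a‖⁻¹ • c a
  set t := (f a / L) ^ (1 / δ)
  have hu : ‖u‖ = 1 := norm_inv_norm_smul_self hca
  have ht : 0 ≤ t := Real.rpow_nonneg (div_pos hfa hL).le _
  have hLt : L * t ^ δ = f a := mul_rpow_rpow_one_div hδ hL hfa.le
  have hq : f (z + ρ • u) < 0 :=
    hball (by rw [mem_closedBall, dist_eq_norm, add_sub_cancel_left, norm_smul, hu,
      Real.norm_of_nonneg hρ, mul_one])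
  have hy : f (z + (ρ + t) • u) < f a := by
    have hhol' := (abs_le.mp (hhol _ (z + (ρ + t) • u) hq.le)).2
    rw [show z + (ρ + t) • u - (z + ρ • u) = t • u by rw [add_smul]; abel, norm_smul, hu,
      Real.norm_of_nonneg ht, mul_one, hLt] at hhol'
    linarith
  have hinner : inner ℝ u (z + (ρ + t) • u - a) ≤ 0 := by
    rw [real_inner_smul_left]
    exact mul_nonpos_of_nonneg_of_nonpos (by positivity) (hstar _ hy)
  rw [show z + (ρ + t) • u - a = (ρ + t) • u - (a - z) by abel, inner_sub_right,
    real_inner_smul_right, real_inner_self_eq_norm_sq, hu] at hinner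
  rw [dist_starProj_of_pos hL hfa hca, starProj_of_pos hfa, dist_eq_norm, dist_eq_norm]
  exact norm_sub_smul_sub_sq_add_le hu ht (by linarith)

end StarProj

theorem compFamily_eq_foldl_drop {n m : ℕ}
    (T : Fin m → (EuclideanSpace ℝ (Fin n) → EuclideanSpace ℝ (Fin n))) (i : Fin m)
    (a : EuclideanSpace ℝ (Fin n)) :
    compFamily T a = ((List.ofFn T).drop (i + 1)).foldl (fun y g => g y)
      (T i (((List.ofFn T).take i).foldl (fun y g => g y) a)) := by
  show (List.ofFn T).foldl _ a = _
  conv_lhs => rw [← List.take_append_drop i (List.ofFn T)]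
  rw [List.foldl_append, List.drop_eq_getElem_cons (by simp), List.foldl_cons, List.getElem_ofFn]

theorem cyclic_starProj_tendsto_solution_general {n m : ℕ}
    (f : Fin m → EuclideanSpace ℝ (Fin n) → ℝ) (δ L : Fin m → ℝ)
    (hδ : ∀ i, 0 < δ i) (hL : ∀ i, 0 < L i)
    (hqc : ∀ i, ∀ lam : ℝ, Convex ℝ {y : EuclideanSpace ℝ (Fin n) | f i y ≤ lam})
    (husc : ∀ i, ∀ lam : ℝ, IsOpen {y : EuclideanSpace ℝ (Fin n) | f i y < lam})
    (hlsc0 : ∀ i, IsClosed {y : EuclideanSpace ℝ (Fin n) | f i y ≤ 0})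
    (hhol : ∀ i, ∀ q x' : EuclideanSpace ℝ (Fin n),
      f i q ≤ 0 → |f i x' - f i q| ≤ L i * ‖x' - q‖ ^ (δ i))
    (hne : ∃ z : EuclideanSpace ℝ (Fin n), ∀ i, f i z < 0)
    (c : Fin m → EuclideanSpace ℝ (Fin n) → EuclideanSpace ℝ (Fin n))
    (hc : ∀ i, ∀ x, 0 < f i x → c i x ∈ starSubdiff (f i) x ∧ c i x ≠ 0)
    (x : ℕ → EuclideanSpace ℝ (Fin n))
    (hx : ∀ k : ℕ, x (k + 1) = compFamily (fun i => starProj (f i) (L i) (δ i) (c i)) (x k)) :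
    ∃ xstar : EuclideanSpace ℝ (Fin n), (∀ i, f i xstar ≤ 0) ∧
      Filter.Tendsto x Filter.atTop (nhds xstar) := by
  obtain ⟨z, hz⟩ := hne
  have hU : IsOpen {y | ∀ i, f i y < 0} := by
    simpa only [Set.ofPred_forall] using isOpen_iInter_of_finite fun i => husc i 0
  obtain ⟨ρ, hρ, hball⟩ := nhds_basis_closedBall.mem_iff.1 (hU.mem_nhds hz)
  have hρ2 : 0 < 2 * ρ := by positivity
  set T := fun i => starProj (f i) (L i) (δ i) (c i)
  have hT : ∀ i, IsLinearlyFejer (2 * ρ) z (T i) := fun i =>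
    starProj_isLinearlyFejer (hδ i) (hL i) (hc i) (hhol i) hρ.le fun v hv => hball hv i
  have hTs : ∀ g ∈ List.ofFn T, IsLinearlyFejer (2 * ρ) z g := List.forall_mem_ofFn_iff.2 hT
  obtain ⟨xs, hxs⟩ := cauchySeq_tendsto_of_complete
    ((IsLinearlyFejer.foldl hρ2.le hTs).cauchySeq_of_iterate hρ2 hx)
  refine ⟨xs, fun i => ?_, hxs⟩
  -- a sweep is `R ∘ T i ∘ P`, with `P` the first `i` projections and `R` the remaining ones
  have hP := IsLinearlyFejer.foldl hρ2.le fun g hg => hTs g (List.mem_of_mem_take (i := i) hg)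
  have hR := IsLinearlyFejer.foldl hρ2.le fun g hg => hTs g (List.mem_of_mem_drop (i := i + 1) hg)
  have hx' := fun k => (hx k).trans (compFamily_eq_foldl_drop T i (x k))
  have ha := (hR.comp hρ2.le (hT i)).tendsto_of_iterate_comp hρ2 hP hx' hxs
  have hb := hR.tendsto_of_iterate_comp hρ2 ((hT i).comp hρ2.le hP) hx' hxs
  have hμ := ((hb.dist ha).rpow_const (Or.inr (hδ i).le)).const_mul (L i)
  rw [dist_self, Real.zero_rpow (hδ i).ne', mul_zero] at hμ
  refine le_zero_of_tendsto_of_eventually_le (hqc i) (husc i 0) (hlsc0 i) (hz i) ha fun ε hε => ?_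
  filter_upwards [hμ.eventually_lt_const hε] with k hk
  exact (le_mul_dist_starProj_rpow (hδ i) (hL i) fun y hy => (hc i y hy).2).trans hk.le

/-- Convergence of the cyclic star subgradient projection method for the quasi-convex
feasibility problem: if each `f i` is quasi-convex, upper semicontinuous,
`0`-lower semicontinuous and satisfies property (sHöl) with order `δ i > 0` and modulus
`L i > 0`, and the intersection of the strict zero sublevel sets is nonempty, then the
cyclic iterates converge to a point of `⋂ i, S^{f_i}_{≤,0}`. -/
theorem cyclic_starProj_tendsto_solution {n m : ℕ} (hm : 0 < m)
    (f : Fin m → EuclideanSpace ℝ (Fin n) → ℝ) (δ L : Fin m → ℝ)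
    (hδ : ∀ i, 0 < δ i) (hL : ∀ i, 0 < L i)
    (hqc : ∀ i, ∀ lam : ℝ, Convex ℝ {y : EuclideanSpace ℝ (Fin n) | f i y ≤ lam})
    (husc : ∀ i, ∀ lam : ℝ, IsOpen {y : EuclideanSpace ℝ (Fin n) | f i y < lam})
    (hlsc0 : ∀ i, IsClosed {y : EuclideanSpace ℝ (Fin n) | f i y ≤ 0})
    (hhol : ∀ i, ∀ q x' : EuclideanSpace ℝ (Fin n),
      f i q ≤ 0 → |f i x' - f i q| ≤ L i * ‖x' - q‖ ^ (δ i))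
    (hne : ∃ z : EuclideanSpace ℝ (Fin n), ∀ i, f i z < 0)
    (c : Fin m → EuclideanSpace ℝ (Fin n) → EuclideanSpace ℝ (Fin n))
    (hc : ∀ i, ∀ x, 0 < f i x → c i x ∈ starSubdiff (f i) x ∧ c i x ≠ 0)
    (x : ℕ → EuclideanSpace ℝ (Fin n))
    (hx : ∀ k : ℕ, x (k + 1) = compFamily (fun i => starProj (f i) (L i) (δ i) (c i)) (x k)) :
    ∃ xstar : EuclideanSpace ℝ (Fin n), (∀ i, f i xstar ≤ 0) ∧
      Filter.Tendsto x Filter.atTop (nhds xstar) :=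
  cyclic_starProj_tendsto_solution_general f δ L hδ hL hqc husc hlsc0 hhol hne c hc x hx
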